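/- arXiv:1107.4284 — 2 statements merged into one kernel-verified Lean document; each statement's English description precedes it below -/
import Mathlib

section
/- Let T be a projective torus in P^{s-1} over the finite field K = F_q with q ≥ 3. Then |T| = (q-1)^{s-1}, and the index of regularity of S/I(T) equals (s-1)(q-2); that is, the Hilbert function satisfies H_T(d) = (q-1)^{s-1} for all d ≥ (s-1)(q-2), and (s-1)(q-2) is the least integer with this property. -/
noncomputable section

open scoped BigOperators

/-- The vanishing ideal `I(Y)` of a set `Y` of points in projective space: the ideal
generated by the homogeneous polynomials vanishing at every point of `Y`. -/
def vanishingIdeal (K : Type*) [Field K] {s : ℕ}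
    (Y : Set (Projectivization K (Fin s → K))) : Ideal (MvPolynomial (Fin s) K) :=
  Ideal.span {f | (∃ d, f.IsHomogeneous d) ∧ ∀ P ∈ Y, MvPolynomial.eval P.rep f = 0}

/-- The Hilbert function `d ↦ dim_K (S/I)_d` of the standard graded quotient `S/I`. -/
def hilbertFunction {K : Type*} [Field K] {s : ℕ}
    (I : Ideal (MvPolynomial (Fin s) K)) (d : ℕ) : ℕ :=
  Module.finrank K ((MvPolynomial.homogeneousSubmodule (Fin s) K d).map
    (Ideal.Quotient.mkₐ K I).toLinearMap)

/-- The index of regularity of `S/I(Y)`: the least `p ≥ 0` such that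
`H_Y(d) = |Y|` for all `d ≥ p`. -/
def regIndex {K : Type*} [Field K] {s : ℕ}
    (Y : Set (Projectivization K (Fin s → K))) : ℕ :=
  sInf {p : ℕ | ∀ d, p ≤ d → hilbertFunction (vanishingIdeal K Y) d = Y.ncard}

/-- The algebraic toric set in `P^{s-1}` parameterized by the monomials `y^{v_1},…,y^{v_s}`. -/
def toricSet (K : Type*) [Field K] {n s : ℕ} (v : Fin s → Fin n → ℕ) :
    Set (Projectivization K (Fin s → K)) :=
  {P | ∃ x : Fin n → K, (∀ j, x j ≠ 0) ∧
      ∃ h : (fun i : Fin s => ∏ j, x j ^ v i j) ≠ 0,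
        P = Projectivization.mk K (fun i : Fin s => ∏ j, x j ^ v i j) h}

/-- The projective torus in `P^{s-1}`: the points all of whose coordinates are nonzero. -/
def projTorus (K : Type*) [Field K] (s : ℕ) : Set (Projectivization K (Fin s → K)) :=
  {P | ∀ i, P.rep i ≠ 0}

/-- The parameterized (evaluation) code `C_Y(d)`: the image of the degree-`d` evaluation map
`f ↦ (f(P)/t_1^d(P))_{P ∈ Y}`. -/
def evalCode (K : Type*) [Field K] {s : ℕ} [NeZero s]
    (Y : Set (Projectivization K (Fin s → K))) (d : ℕ) : Set (Y → K) :=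
  {w | ∃ f ∈ MvPolynomial.homogeneousSubmodule (Fin s) K d,
      w = fun P : Y => MvPolynomial.eval (P : Projectivization K (Fin s → K)).rep f /
        ((P : Projectivization K (Fin s → K)).rep 0) ^ d}

/-- The minimum distance of a code: the least number of nonzero entries of a
nonzero codeword. -/
def minDist {K : Type*} [Field K] {ι : Type*} (C : Set (ι → K)) : ℕ :=
  sInf {m | ∃ w ∈ C, w ≠ 0 ∧ m = {i | w i ≠ 0}.ncard}

/-- `v 1,…,v s` are the characteristic vectors of the edges of a clutter: all the entries
are in `{0,1}` and no edge (support) is contained in another. -/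
def IsClutter {n s : ℕ} (v : Fin s → Fin n → ℕ) : Prop :=
  (∀ i j, v i j ≤ 1) ∧ ∀ i k : Fin s, i ≠ k → ∃ j, v i j ≠ 0 ∧ v k j = 0

/-- An ideal of `K[t_1,…,t_s]` is a complete intersection if it can be generated by `s-1`
homogeneous polynomials. -/
def IsCompleteIntersection {K : Type*} [Field K] {s : ℕ}
    (I : Ideal (MvPolynomial (Fin s) K)) : Prop :=
  ∃ g : Fin (s - 1) → MvPolynomial (Fin s) K,
    (∀ i, ∃ d, (g i).IsHomogeneous d) ∧ Ideal.span (Set.range g) = I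

end

/-!
Normalising the first coordinate identifies the torus with `(Kˣ)^(s-1)` via `x ↦ [1 : x]`, so a
homogeneous `f` of degree `d` lies in `I(T)` iff `x ↦ f(1, x)` vanishes on `(Kˣ)^(s-1)`, and
`H_T(d)` is the dimension of the space of these functions for `f ∈ S_d`. The monomial `t^b` gives
the character `x ↦ ∏ x_j ^ (b_j mod (q-1))`, and the `(q-1)^(s-1)` characters with exponents in
`[0, q-2]` form a basis of all functions `(Kˣ)^(s-1) → K` by Dedekind's independence of
characters. Every character is reached in each degree `d ≥ (s-1)(q-2)`, whereas the one with all
exponents `q-2` needs a monomial of degree at least `(s-1)(q-2)`. Hence `H_T(d) = (q-1)^(s-1)`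
exactly when `d ≥ (s-1)(q-2)`.
-/

open MvPolynomial

theorem MvPolynomial.IsHomogeneous.eval_smul {R σ : Type*} [CommSemiring R]
    {f : MvPolynomial σ R} {d : ℕ} (hf : f.IsHomogeneous d) (c : R) (x : σ → R) :
    eval (c • x) f = c ^ d * eval x f := by
  conv_lhs => rw [← f.support_sum_monomial_coeff]
  conv_rhs => rw [← f.support_sum_monomial_coeff]
  rw [map_sum, map_sum, Finset.mul_sum]
  refine Finset.sum_congr rfl fun b hb => ?_
  rw [eval_monomial, eval_monomial, Finsupp.prod, Finsupp.prod]
  simp only [Pi.smul_apply, smul_eq_mul, mul_pow]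
  rw [Finset.prod_mul_distrib, Finset.prod_pow_eq_pow_sum, ← hf.degree_eq_sum_deg_support hb]
  ring

theorem Submodule.finrank_map_eq_finrank_map_of_ker {R M P Q : Type*} [Ring R]
    [AddCommGroup M] [Module R M] [AddCommGroup P] [Module R P] [AddCommGroup Q] [Module R Q]
    (N : Submodule R M) (f : M →ₗ[R] P) (g : M →ₗ[R] Q) (h : ∀ x ∈ N, f x = 0 ↔ g x = 0) :
    Module.finrank R (N.map f) = Module.finrank R (N.map g) := by
  have hker : LinearMap.ker (f.domRestrict N) = LinearMap.ker (g.domRestrict N) := by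
    ext x
    exact h x x.2
  rw [← LinearMap.range_domRestrict, ← LinearMap.range_domRestrict]
  exact ((f.domRestrict N).quotKerEquivRange.symm ≪≫ₗ Submodule.quotEquivOfEq _ _ hker ≪≫ₗ
    (g.domRestrict N).quotKerEquivRange).finrank_eq

section

variable {K : Type*} [Field K] {s : ℕ}

theorem eval_rep_mk_eq_zero_iff {ι : Type*} {f : MvPolynomial ι K} {d : ℕ}
    (hf : f.IsHomogeneous d) {v : ι → K} (hv : v ≠ 0) :
    eval (Projectivization.mk K v hv).rep f = 0 ↔ eval v f = 0 := by
  obtain ⟨a, ha⟩ := Projectivization.exists_smul_eq_mk_rep K v hv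
  rw [← ha, Units.smul_def, hf.eval_smul, mul_eq_zero, or_iff_right (pow_ne_zero _ a.ne_zero)]

theorem mem_vanishingIdeal_iff_of_isHomogeneous {Y : Set (Projectivization K (Fin s → K))}
    {f : MvPolynomial (Fin s) K} {d : ℕ} (hf : f.IsHomogeneous d) :
    f ∈ vanishingIdeal K Y ↔ ∀ P ∈ Y, eval P.rep f = 0 := by
  refine ⟨fun hfY P hP => ?_, fun h => Ideal.subset_span ⟨⟨d, hf⟩, h⟩⟩
  have hle : vanishingIdeal K Y ≤ RingHom.ker (eval P.rep) :=
    Ideal.span_le.2 fun g hg => hg.2 P hP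
  exact hle hfY

theorem hilbertFunction_eq_finrank_map {M : Type*} [AddCommGroup M] [Module K M]
    (I : Ideal (MvPolynomial (Fin s) K)) (E : MvPolynomial (Fin s) K →ₗ[K] M) (d : ℕ)
    (h : ∀ f ∈ homogeneousSubmodule (Fin s) K d, f ∈ I ↔ E f = 0) :
    hilbertFunction I d = Module.finrank K ((homogeneousSubmodule (Fin s) K d).map E) :=
  Submodule.finrank_map_eq_finrank_map_of_ker _ _ _ fun f hf => by
    rw [AlgHom.toLinearMap_apply, Ideal.Quotient.mkₐ_eq_mk, Ideal.Quotient.eq_zero_iff_mem,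
      h f hf]

theorem mk_mem_projTorus_iff {v : Fin s → K} (hv : v ≠ 0) :
    Projectivization.mk K v hv ∈ projTorus K s ↔ ∀ i, v i ≠ 0 := by
  obtain ⟨a, ha⟩ := Projectivization.exists_smul_eq_mk_rep K v hv
  simp [projTorus, ← ha, Units.smul_def, a.ne_zero]

end

namespace ProjTorus

variable {K : Type*} [Field K] {m : ℕ}

def point (x : Fin m → Kˣ) : Fin (m + 1) → K :=
  Fin.cons 1 fun j => (x j : K)

theorem point_apply_ne_zero (x : Fin m → Kˣ) (i : Fin (m + 1)) : point x i ≠ 0 :=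
  Fin.cases (by simp [point]) (fun j => by simp [point]) i

theorem point_ne_zero (x : Fin m → Kˣ) : point x ≠ 0 :=
  fun h => point_apply_ne_zero x 0 (congrFun h 0)

def toProj (x : Fin m → Kˣ) : Projectivization K (Fin (m + 1) → K) :=
  Projectivization.mk K (point x) (point_ne_zero x)

theorem toProj_mem (x : Fin m → Kˣ) : toProj x ∈ projTorus K (m + 1) :=
  (mk_mem_projTorus_iff _).2 (point_apply_ne_zero x)

theorem toProj_injective : Function.Injective (toProj (K := K) (m := m)) := by
  intro x y hxy
  obtain ⟨a, ha⟩ := (Projectivization.mk_eq_mk_iff K _ _ _ _).1 hxy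
  have ha1 : (a : K) = 1 := by simpa [point, Units.smul_def] using congrFun ha 0
  funext j
  exact Units.ext (by simpa [point, Units.smul_def, ha1] using (congrFun ha j.succ).symm)

theorem exists_toProj_eq {P : Projectivization K (Fin (m + 1) → K)}
    (hP : P ∈ projTorus K (m + 1)) : ∃ x, toProj x = P := by
  have h0 : P.rep 0 ≠ 0 := hP 0
  refine ⟨fun j => Units.mk0 (P.rep j.succ / P.rep 0) (div_ne_zero (hP j.succ) h0), ?_⟩
  conv_rhs => rw [← Projectivization.mk_rep P]
  refine (Projectivization.mk_eq_mk_iff' K _ _ _ _).2 ⟨(P.rep 0)⁻¹, funext fun i => ?_⟩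
  refine Fin.cases ?_ (fun j => ?_) i
  · simp [point, inv_mul_cancel₀ h0]
  · simp [point, div_eq_inv_mul]

theorem ncard_projTorus [Fintype K] : (projTorus K (m + 1)).ncard = (Fintype.card K - 1) ^ m := by
  classical
  have hbij : Set.BijOn toProj (Set.univ : Set (Fin m → Kˣ)) (projTorus K (m + 1)) :=
    ⟨fun x _ => toProj_mem x, toProj_injective.injOn,
      fun P hP => (exists_toProj_eq hP).imp fun x hx => ⟨trivial, hx⟩⟩
  rw [← hbij.image_eq, Set.ncard_image_of_injective _ toProj_injective, Set.ncard_univ,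
    Nat.card_eq_fintype_card, Fintype.card_fun, Fintype.card_units, Fintype.card_fin]

noncomputable def evalMap : MvPolynomial (Fin (m + 1)) K →ₗ[K] (Fin m → Kˣ) → K :=
  LinearMap.pi fun x => (aeval (point x)).toLinearMap

theorem evalMap_apply (f : MvPolynomial (Fin (m + 1)) K) (x : Fin m → Kˣ) :
    evalMap f x = MvPolynomial.eval (point x) f := by
  simp [ProjTorus.evalMap]

theorem mem_vanishingIdeal_iff {f : MvPolynomial (Fin (m + 1)) K} {d : ℕ}
    (hf : f.IsHomogeneous d) : f ∈ vanishingIdeal K (projTorus K (m + 1)) ↔ evalMap f = 0 := by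
  rw [mem_vanishingIdeal_iff_of_isHomogeneous hf, funext_iff]
  constructor
  · intro h x
    rw [Pi.zero_apply, evalMap_apply, ← eval_rep_mk_eq_zero_iff hf (point_ne_zero x)]
    exact h _ (toProj_mem x)
  · rintro h P hP
    obtain ⟨x, rfl⟩ := exists_toProj_eq hP
    rw [toProj, eval_rep_mk_eq_zero_iff hf, ← evalMap_apply]
    exact h x

theorem hilbertFunction_eq_finrank_map_evalMap (d : ℕ) :
    hilbertFunction (vanishingIdeal K (projTorus K (m + 1))) d =
      Module.finrank K ((homogeneousSubmodule (Fin (m + 1)) K d).map evalMap) :=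
  _root_.hilbertFunction_eq_finrank_map _ _ d fun _ hf => mem_vanishingIdeal_iff hf

def character (a : Fin m → ℕ) : (Fin m → Kˣ) →* K where
  toFun x := ∏ j, (x j : K) ^ a j
  map_one' := by simp
  map_mul' x y := by simp only [Pi.mul_apply, Units.val_mul, mul_pow, Finset.prod_mul_distrib]

theorem character_apply (a : Fin m → ℕ) (x : Fin m → Kˣ) :
    character a x = ∏ j, (x j : K) ^ a j :=
  rfl

theorem character_mulSingle [DecidableEq (Fin m)] (a : Fin m → ℕ) (j : Fin m) (g : Kˣ) :
    character a (Pi.mulSingle j g) = ((g ^ a j : Kˣ) : K) := by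
  rw [character_apply, Fintype.prod_eq_single j fun i hi => by simp [hi]]
  simp

theorem evalMap_monomial (b : Fin (m + 1) →₀ ℕ) (c : K) :
    evalMap (monomial b c) = c • ⇑(character fun j => b j.succ) := by
  funext x
  rw [evalMap_apply, MvPolynomial.eval_monomial, Finsupp.prod_pow, Fin.prod_univ_succ]
  simp [point, character_apply]

theorem character_mem_map_evalMap {d : ℕ} (a : Fin m → ℕ) (ha : ∑ j, a j ≤ d) :
    ⇑(character (K := K) a) ∈ (homogeneousSubmodule (Fin (m + 1)) K d).map evalMap := by
  let b : Fin (m + 1) →₀ ℕ := Finsupp.equivFunOnFinite.symm (Fin.cons (d - ∑ j, a j) a)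
  refine ⟨monomial b 1, isHomogeneous_monomial _ ?_, ?_⟩
  · simp only [b, Finsupp.degree_eq_sum, Finsupp.coe_equivFunOnFinite_symm, Fin.sum_univ_succ,
      Fin.cons_zero, Fin.cons_succ]
    omega
  · rw [evalMap_monomial, one_smul]
    rfl

section Finite

variable [Fintype K] [DecidableEq K] {d : ℕ}

theorem character_mod_card (a : Fin m → ℕ) :
    character (fun j => a j % Fintype.card Kˣ) = character (K := K) a := by
  refine MonoidHom.ext fun x => ?_
  simp only [character_apply]
  refine Finset.prod_congr rfl fun j _ => ?_
  rw [← Units.val_pow_eq_pow_val, pow_mod_card, Units.val_pow_eq_pow_val]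

theorem character_injective :
    Function.Injective fun a : Fin m → Fin (Fintype.card Kˣ) =>
      character (K := K) fun j => (a j : ℕ) := by
  intro a b hab
  obtain ⟨g, hg⟩ := IsCyclic.exists_ofOrder_eq_natCard (α := Kˣ)
  funext j
  have h := DFunLike.congr_fun hab (Pi.mulSingle j g)
  rw [character_mulSingle, character_mulSingle, Units.val_inj] at h
  have hlt : ∀ c : Fin (Fintype.card Kˣ), (c : ℕ) ∈ Set.Iio (orderOf g) := fun c => by
    simp [hg, Nat.card_eq_fintype_card]
  exact Fin.ext (pow_injOn_Iio_orderOf (hlt _) (hlt _) h)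

theorem linearIndependent_character :
    LinearIndependent K fun a : Fin m → Fin (Fintype.card Kˣ) =>
      ⇑(character (K := K) fun j => (a j : ℕ)) :=
  (linearIndependent_monoidHom (Fin m → Kˣ) K).comp _ character_injective

theorem span_character :
    Submodule.span K (Set.range fun a : Fin m → Fin (Fintype.card Kˣ) =>
      ⇑(character (K := K) fun j => (a j : ℕ))) = ⊤ :=
  linearIndependent_character.span_eq_top_of_card_eq_finrank' (by simp)

theorem map_evalMap_le_span (hd : d < m * (Fintype.card Kˣ - 1)) :
    (homogeneousSubmodule (Fin (m + 1)) K d).map evalMap ≤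
      Submodule.span K ((fun a : Fin m → Fin (Fintype.card Kˣ) =>
        ⇑(character (K := K) fun j => (a j : ℕ))) ''
          {a | ∃ j, (a j : ℕ) < Fintype.card Kˣ - 1}) := by
  rintro _ ⟨f, hf, rfl⟩
  rw [← f.support_sum_monomial_coeff, map_sum]
  refine Submodule.sum_mem _ fun b hb => ?_
  rw [evalMap_monomial, ← character_mod_card]
  refine Submodule.smul_mem _ _ (Submodule.subset_span
    ⟨fun j => ⟨b j.succ % Fintype.card Kˣ, Nat.mod_lt _ Fintype.card_pos⟩, ?_, rfl⟩)
  show ∃ j, _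
  by_contra! hall
  have hdeg : m * (Fintype.card Kˣ - 1) ≤ d :=
    calc m * (Fintype.card Kˣ - 1) = ∑ _j : Fin m, (Fintype.card Kˣ - 1) := by simp
      _ ≤ ∑ j : Fin m, b j.succ :=
        Finset.sum_le_sum fun j _ => (hall j).trans (Nat.mod_le _ _)
      _ ≤ b.degree := by rw [Finsupp.degree_eq_sum, Fin.sum_univ_succ]; omega
      _ = d := (hf.degree_eq_sum_deg_support hb).symm
  omega

theorem map_evalMap_eq_top_iff :
    (homogeneousSubmodule (Fin (m + 1)) K d).map evalMap = ⊤ ↔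
      m * (Fintype.card Kˣ - 1) ≤ d := by
  constructor
  · intro htop
    by_contra! hd
    let top : Fin m → Fin (Fintype.card Kˣ) :=
      fun _ => ⟨_, Nat.sub_one_lt Fintype.card_ne_zero⟩
    have hmem : ⇑(character (K := K) fun j => (top j : ℕ)) ∈ _ :=
      map_evalMap_le_span hd (htop ▸ Submodule.mem_top)
    exact linearIndependent_character.notMem_span_image (by simp [top]) hmem
  · intro hd
    rw [eq_top_iff, ← span_character, Submodule.span_le]
    rintro _ ⟨a, rfl⟩
    refine character_mem_map_evalMap _ (le_trans ?_ hd)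
    calc ∑ j, (a j : ℕ) ≤ Finset.univ.card • (Fintype.card Kˣ - 1) :=
          Finset.sum_le_card_nsmul _ _ _ fun j _ => Nat.le_sub_one_of_lt (a j).isLt
      _ = m * (Fintype.card Kˣ - 1) := by simp

end Finite

theorem hilbertFunction_eq_ncard_iff [Fintype K] {d : ℕ} :
    hilbertFunction (vanishingIdeal K (projTorus K (m + 1))) d = (projTorus K (m + 1)).ncard ↔
      m * (Fintype.card K - 2) ≤ d := by
  classical
  have hunits : Fintype.card K - 2 = Fintype.card Kˣ - 1 := by rw [Fintype.card_units]; omega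
  rw [hilbertFunction_eq_finrank_map_evalMap, ncard_projTorus, hunits, ← map_evalMap_eq_top_iff,
    Submodule.eq_top_iff_finrank_eq]
  simp [Fintype.card_units]

end ProjTorus

theorem stmt4_general {K : Type*} [Field K] [Fintype K] {q s : ℕ}
    (hq : Fintype.card K = q) (hs : 2 ≤ s) :
    (projTorus K s).ncard = (q - 1) ^ (s - 1) ∧
    (∀ d, (s - 1) * (q - 2) ≤ d →
      hilbertFunction (vanishingIdeal K (projTorus K s)) d = (q - 1) ^ (s - 1)) ∧
    regIndex (projTorus K s) = (s - 1) * (q - 2) := by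
  obtain ⟨m, rfl⟩ : ∃ m, s = m + 1 := ⟨s - 1, by omega⟩
  subst hq
  rw [Nat.add_sub_cancel, ← ProjTorus.ncard_projTorus]
  refine ⟨rfl, fun d hd => ProjTorus.hilbertFunction_eq_ncard_iff.2 hd, ?_⟩
  simp only [regIndex, ProjTorus.hilbertFunction_eq_ncard_iff]
  exact le_antisymm (Nat.sInf_le fun d => id)
    (le_csInf ⟨_, fun d => id⟩ fun p hp => hp p le_rfl)

/-- For the projective torus `T ⊆ P^{s-1}` over `F_q` (`q ≥ 3`),
`|T| = (q-1)^{s-1}`, the Hilbert function of `S/I(T)` equals `(q-1)^{s-1}` in every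
degree `d ≥ (s-1)(q-2)`, and `(s-1)(q-2)` is the least integer with this property,
i.e. the index of regularity of `S/I(T)` equals `(s-1)(q-2)`. -/
theorem stmt4 {K : Type*} [Field K] [Fintype K] {q s : ℕ}
    (hq : Fintype.card K = q) (hq3 : 3 ≤ q) (hs : 2 ≤ s) :
    (projTorus K s).ncard = (q - 1) ^ (s - 1) ∧
    (∀ d, (s - 1) * (q - 2) ≤ d →
      hilbertFunction (vanishingIdeal K (projTorus K s)) d = (q - 1) ^ (s - 1)) ∧
    regIndex (projTorus K s) = (s - 1) * (q - 2) :=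
  stmt4_general hq hs
end

section
/- Let X be the algebraic toric set parameterized by the monomials arising from the edges of a clutter, and let A be the n × s matrix with columns v_1,...,v_s. Then the vanishing ideal I(X) equals the ideal of S generated by the binomials t^{a^+} - t^{a^-} (a ∈ Z^s) such that A a^+ ≡ A a^- (mod q-1) componentwise and |a^+| = |a^-|. -/
/-!
At a point `(x^{v_1}, …, x^{v_s})` of `X`, with `x ∈ (K^*)^n`, a monomial `t^c` takes the value
`x^{Ac}`, a character of the group `(K^*)^n`. Since `K^*` is cyclic of order `q - 1`, two
monomials give the same character iff `Ac ≡ Ac' (mod q - 1)`. By Artin's linear independence of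
characters, a polynomial vanishing on `X` has zero coefficient sum on every class of monomials
with a common character, so it is a combination of differences `t^c - t^{c'}` within one class;
for homogeneous `f` these have equal degree, and `t^c - t^{c'}` is a monomial multiple of the
binomial `t^{a^+} - t^{a^-}` with `a = c - c'`. Conversely, these binomials are homogeneous and
vanish on `X`.
-/

open MvPolynomial Finset

theorem Ideal.sum_mul_mem_of_sub_mem {R ι : Type*} [CommRing R] {J : Ideal R} {F : Finset ι}
    {a m : ι → R} (hm : ∀ c ∈ F, ∀ c' ∈ F, m c - m c' ∈ J) (ha : ∑ c ∈ F, a c = 0) :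
    ∑ c ∈ F, a c * m c ∈ J := by
  rcases F.eq_empty_or_nonempty with rfl | ⟨c₀, hc₀⟩
  · simp
  have hshift : ∑ c ∈ F, a c * m c = ∑ c ∈ F, a c * (m c - m c₀) := by
    simp only [mul_sub, sum_sub_distrib, ← sum_mul, ha, zero_mul, sub_zero]
  rw [hshift]
  exact J.sum_mem fun c hc => J.mul_mem_left _ (hm c hc c₀ hc₀)

theorem Nat.modEq_sub_one_iff_intCast_dvd {q a b : ℕ} (hq : 0 < q) :
    a ≡ b [MOD q - 1] ↔ ((q : ℤ) - 1) ∣ a - b := by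
  rw [Nat.ModEq.comm, Nat.modEq_iff_dvd, Nat.cast_sub hq, Nat.cast_one]

theorem FiniteField.forall_prod_pow_eq_iff {K ι : Type*} [Field K] [Fintype K] [Fintype ι]
    {e e' : ι → ℕ} :
    (∀ x : ι → Kˣ, ∏ j, x j ^ e j = ∏ j, x j ^ e' j) ↔
      ∀ j, e j ≡ e' j [MOD Fintype.card K - 1] := by
  classical
  obtain ⟨g, hg⟩ := IsCyclic.exists_ofOrder_eq_natCard (α := Kˣ)
  have hcard : Nat.card Kˣ = Fintype.card K - 1 := by
    rw [Nat.card_units, Nat.card_eq_fintype_card]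
  constructor
  · intro h j
    have hj := h (Pi.mulSingle j g)
    simp only [Pi.mulSingle_apply, ite_pow, one_pow, prod_ite_eq', mem_univ, if_true] at hj
    rwa [pow_eq_pow_iff_modEq, hg, hcard] at hj
  · intro h x
    refine prod_congr rfl fun j _ => pow_eq_pow_iff_modEq.2 ((h j).of_dvd ?_)
    rw [← hcard]
    exact orderOf_dvd_natCard _

namespace MvPolynomial

section MonomialCharacter

variable {G σ R : Type*} [Monoid G] [CommRing R]

noncomputable def monomialCharacter (φ : G →* (σ → R)) (c : σ →₀ ℕ) : G →* R where
  toFun x := eval (φ x) (monomial c 1)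
  map_one' := by simp [eval_monomial]
  map_mul' x y := by simp [eval_monomial, mul_pow, Finsupp.prod_mul]

theorem eval_eq_sum_monomialCharacter (φ : G →* (σ → R)) (f : MvPolynomial σ R) (x : G) :
    eval (φ x) f = ∑ c ∈ f.support, coeff c f * monomialCharacter φ c x := by
  rw [eval_eq]
  simp only [monomialCharacter, MonoidHom.coe_mk, OneHom.coe_mk, eval_monomial, one_mul,
    Finsupp.prod]

theorem mem_of_forall_eval_eq_zero [IsDomain R] (φ : G →* (σ → R))
    {J : Ideal (MvPolynomial σ R)} {f : MvPolynomial σ R}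
    (hJ : ∀ c ∈ f.support, ∀ c' ∈ f.support,
      monomialCharacter φ c = monomialCharacter φ c' → monomial c 1 - monomial c' 1 ∈ J)
    (hf : ∀ x, eval (φ x) f = 0) : f ∈ J := by
  classical
  set χ := monomialCharacter φ
  have hmaps : ∀ c ∈ f.support, χ c ∈ f.support.image χ := fun c hc => mem_image_of_mem χ hc
  have hclass : ∀ ψ ∈ f.support.image χ, ∑ c ∈ f.support with χ c = ψ, coeff c f = 0 := by
    refine linearIndependent_iff'.1 (linearIndependent_monoidHom G R) _ _ ?_
    funext x
    rw [Finset.sum_apply, Pi.zero_apply, ← hf x, eval_eq_sum_monomialCharacter,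
      ← sum_fiberwise_of_maps_to hmaps]
    refine sum_congr rfl fun ψ _ => ?_
    simp only [Pi.smul_apply, smul_eq_mul, sum_mul]
    exact sum_congr rfl fun c hc => by rw [← (mem_filter.1 hc).2]
  rw [f.as_sum, ← sum_fiberwise_of_maps_to hmaps]
  refine J.sum_mem fun ψ hψ => ?_
  rw [sum_congr rfl fun c _ => by rw [← mul_one (coeff c f), ← C_mul_monomial]]
  refine Ideal.sum_mul_mem_of_sub_mem (fun c hc c' hc' => ?_) ?_
  · rw [mem_filter] at hc hc'
    exact hJ c hc.1 c' hc'.1 (hc.2.trans hc'.2.symm)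
  · rw [← map_sum, hclass ψ hψ, map_zero]

end MonomialCharacter

theorem IsHomogeneous.eval_smul_s15 {σ R : Type*} [CommSemiring R] {f : MvPolynomial σ R} {d : ℕ}
    (hf : f.IsHomogeneous d) (u : R) (y : σ → R) : eval (u • y) f = u ^ d * eval y f := by
  rw [eval_eq, eval_eq, mul_sum]
  refine sum_congr rfl fun c hc => ?_
  simp only [Pi.smul_apply, smul_eq_mul, mul_pow, prod_mul_distrib, prod_pow_eq_pow_sum,
    ← hf.degree_eq_sum_deg_support hc]
  ring

theorem IsHomogeneous.eval_rep_mk_eq_zero_iff {σ K : Type*} [Field K] {f : MvPolynomial σ K}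
    {d : ℕ} (hf : f.IsHomogeneous d) {y : σ → K} (hy : y ≠ 0) :
    eval (Projectivization.mk K y hy).rep f = 0 ↔ eval y f = 0 := by
  obtain ⟨u, hu⟩ := Projectivization.exists_smul_eq_mk_rep K y hy
  rw [← hu, Units.smul_def, hf.eval_smul_s15, mul_eq_zero, or_iff_right (pow_ne_zero _ u.ne_zero)]

section ProdXPow

variable {R σ : Type*} [Fintype σ]

theorem monomial_one_eq_prod_X_pow [CommSemiring R] (c : σ →₀ ℕ) :
    monomial c (1 : R) = ∏ i, X i ^ c i := by
  rw [monomial_eq, C_1, one_mul, Finsupp.prod_fintype _ _ fun i => pow_zero _]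

theorem isHomogeneous_prod_X_pow [CommSemiring R] (e : σ → ℕ) :
    (∏ i, X i ^ e i : MvPolynomial σ R).IsHomogeneous (∑ i, e i) :=
  IsHomogeneous.prod _ _ _ fun i _ => isHomogeneous_X_pow i _

theorem isHomogeneous_prod_X_pow_sub [CommRing R] {e e' : σ → ℕ} (h : ∑ i, e i = ∑ i, e' i) :
    (∏ i, X i ^ e i - ∏ i, X i ^ e' i : MvPolynomial σ R).IsHomogeneous (∑ i, e i) :=
  (isHomogeneous_prod_X_pow e).sub (h ▸ isHomogeneous_prod_X_pow e')

theorem prod_X_pow_sub_prod_X_pow_eq [CommRing R] (c c' : σ → ℕ) :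
    (∏ i, X i ^ c i - ∏ i, X i ^ c' i : MvPolynomial σ R) =
      (∏ i, X i ^ min (c i) (c' i)) * (∏ i, X i ^ (c i - c' i) - ∏ i, X i ^ (c' i - c i)) := by
  simp only [mul_sub, ← prod_mul_distrib, ← pow_add]
  congr 1 <;> refine prod_congr rfl fun i _ => congrArg _ ?_ <;> omega

end ProdXPow

end MvPolynomial

section Toric

variable {K σ ι : Type*} [Field K] [Fintype ι]

variable (K) in
def toricParam (v : σ → ι → ℕ) : (ι → Kˣ) →* (σ → K) where
  toFun x i := ∏ j, (x j : K) ^ v i j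
  map_one' := by ext; simp
  map_mul' x y := by ext; simp [mul_pow, prod_mul_distrib]

@[simp]
theorem toricParam_apply (v : σ → ι → ℕ) (x : ι → Kˣ) (i : σ) :
    toricParam K v x i = ∏ j, (x j : K) ^ v i j :=
  rfl

theorem eval_toricParam_prod_X_pow [Fintype σ] (v : σ → ι → ℕ) (x : ι → Kˣ) (c : σ → ℕ) :
    eval (toricParam K v x) (∏ i, X i ^ c i) = ↑(∏ j, x j ^ ∑ i, c i * v i j) := by
  simp only [map_prod, map_pow, eval_X, toricParam_apply]
  push_cast
  simp_rw [← prod_pow, ← pow_mul]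
  rw [prod_comm]
  simp_rw [prod_pow_eq_pow_sum, mul_comm]

theorem monomialCharacter_toricParam_apply [Fintype σ] (v : σ → ι → ℕ) (c : σ →₀ ℕ)
    (x : ι → Kˣ) :
    monomialCharacter (toricParam K v) c x = ↑(∏ j, x j ^ ∑ i, c i * v i j) := by
  rw [← eval_toricParam_prod_X_pow, ← monomial_one_eq_prod_X_pow]
  rfl

theorem monomialCharacter_toricParam_eq_iff [Fintype K] [Fintype σ] (v : σ → ι → ℕ)
    {c c' : σ →₀ ℕ} :
    monomialCharacter (toricParam K v) c = monomialCharacter (toricParam K v) c' ↔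
      ∀ j, ∑ i, c i * v i j ≡ ∑ i, c' i * v i j [MOD Fintype.card K - 1] := by
  rw [← FiniteField.forall_prod_pow_eq_iff (K := K), DFunLike.ext_iff]
  simp only [monomialCharacter_toricParam_apply, Units.val_inj]

theorem eval_toricParam_prod_X_pow_sub_eq_zero [Fintype K] [Fintype σ] {v : σ → ι → ℕ}
    {e e' : σ → ℕ} (h : ∀ j, ∑ i, e i * v i j ≡ ∑ i, e' i * v i j [MOD Fintype.card K - 1])
    (x : ι → Kˣ) : eval (toricParam K v x) (∏ i, X i ^ e i - ∏ i, X i ^ e' i) = 0 := by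
  rw [map_sub, eval_toricParam_prod_X_pow, eval_toricParam_prod_X_pow,
    FiniteField.forall_prod_pow_eq_iff.2 h x, sub_self]

theorem forall_mem_toricSet_eval_eq_zero_iff {n s : ℕ} (hs : 0 < s) (v : Fin s → Fin n → ℕ)
    {f : MvPolynomial (Fin s) K} {d : ℕ} (hf : f.IsHomogeneous d) :
    (∀ P ∈ toricSet K v, eval P.rep f = 0) ↔ ∀ x, eval (toricParam K v x) f = 0 := by
  constructor
  · intro h x
    have hx : toricParam K v x ≠ 0 := Function.ne_iff.2 ⟨⟨0, hs⟩, by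
      rw [toricParam_apply]; exact prod_ne_zero_iff.2 fun j _ => pow_ne_zero _ (x j).ne_zero⟩
    rw [← hf.eval_rep_mk_eq_zero_iff hx]
    exact h _ ⟨fun j => x j, fun j => (x j).ne_zero, hx, rfl⟩
  · rintro h P ⟨x, hx, _, rfl⟩
    rw [hf.eval_rep_mk_eq_zero_iff]
    exact h fun j => Units.mk0 (x j) (hx j)

variable (K) in
def toricBinomials {n s : ℕ} (q : ℕ) (v : Fin s → Fin n → ℕ) :
    Set (MvPolynomial (Fin s) K) :=
  {f | ∃ a : Fin s → ℤ,
    (∀ j : Fin n, ((q : ℤ) - 1) ∣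
      (∑ i, ((a i).toNat : ℤ) * (v i j : ℤ) - ∑ i, ((-(a i)).toNat : ℤ) * (v i j : ℤ))) ∧
    (∑ j, (a j).toNat = ∑ j, (-(a j)).toNat) ∧
    f = ∏ i, X i ^ (a i).toNat - ∏ i, X i ^ (-(a i)).toNat}

theorem prod_X_pow_sub_prod_X_pow_mem_span_toricBinomials {n s q : ℕ} (hq : 0 < q)
    {v : Fin s → Fin n → ℕ} {c c' : Fin s → ℕ} (hdeg : ∑ i, c i = ∑ i, c' i)
    (hmod : ∀ j, ∑ i, c i * v i j ≡ ∑ i, c' i * v i j [MOD q - 1]) :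
    ∏ i, X i ^ c i - ∏ i, X i ^ c' i ∈ Ideal.span (toricBinomials K q v) := by
  set a : Fin s → ℤ := fun i => c i - c' i
  have hpos : ∀ i, (a i).toNat = c i - c' i := fun i => Int.toNat_sub _ _
  have hneg : ∀ i, (-a i).toNat = c' i - c i := fun i => by
    rw [neg_sub]; exact Int.toNat_sub _ _
  have hmem : ∏ i, X i ^ (a i).toNat - ∏ i, X i ^ (-a i).toNat ∈ toricBinomials K q v := by
    refine ⟨a, fun j => ?_, ?_, rfl⟩
    · have hsum : ∑ i, ((a i).toNat : ℤ) * v i j - ∑ i, ((-a i).toNat : ℤ) * v i j =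
          ∑ i, (c i : ℤ) * v i j - ∑ i, (c' i : ℤ) * v i j := by
        simp only [← sum_sub_distrib, ← sub_mul, Int.toNat_sub_toNat_neg, a]
      rw [hsum]
      exact_mod_cast (Nat.modEq_sub_one_iff_intCast_dvd hq).1 (hmod j)
    · have hc : ∑ i, c i = ∑ i, min (c i) (c' i) + ∑ i, (c i - c' i) := by
        rw [← sum_add_distrib]; exact sum_congr rfl fun i _ => by omega
      have hc' : ∑ i, c' i = ∑ i, min (c i) (c' i) + ∑ i, (c' i - c i) := by
        rw [← sum_add_distrib]; exact sum_congr rfl fun i _ => by omega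
      simp only [hpos, hneg]
      omega
  rw [prod_X_pow_sub_prod_X_pow_eq]
  simp only [hpos, hneg] at hmem
  exact Ideal.mul_mem_left _ _ (Ideal.subset_span hmem)

end Toric

theorem stmt15_general {K : Type*} [Field K] [Fintype K] {q n s : ℕ}
    (hq : Fintype.card K = q) (hs : 2 ≤ s)
    (v : Fin s → Fin n → ℕ) :
    vanishingIdeal K (toricSet K v) =
      Ideal.span {f : MvPolynomial (Fin s) K | ∃ a : Fin s → ℤ,
        (∀ jj : Fin n, ((q : ℤ) - 1) ∣
          (∑ i, ((a i).toNat : ℤ) * (v i jj : ℤ)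
            - ∑ i, (((-(a i)).toNat : ℤ)) * (v i jj : ℤ))) ∧
        (∑ j, (a j).toNat = ∑ j, (-(a j)).toNat) ∧
        f = ∏ i, MvPolynomial.X i ^ (a i).toNat
          - ∏ i, MvPolynomial.X i ^ (-(a i)).toNat} := by
  have hq0 : 0 < q := hq ▸ Fintype.card_pos
  refine le_antisymm (Ideal.span_le.2 ?_) (Ideal.span_mono ?_)
  · rintro f ⟨⟨d, hf⟩, hvan⟩
    rw [forall_mem_toricSet_eval_eq_zero_iff (by omega) v hf] at hvan
    refine mem_of_forall_eval_eq_zero (toricParam K v) (fun c hc c' hc' hχ => ?_) hvan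
    rw [monomial_one_eq_prod_X_pow, monomial_one_eq_prod_X_pow]
    refine prod_X_pow_sub_prod_X_pow_mem_span_toricBinomials hq0 ?_ ?_
    · simp only [← Finsupp.degree_eq_sum]
      exact (hf.degree_eq_sum_deg_support hc).symm.trans (hf.degree_eq_sum_deg_support hc')
    · rwa [← hq, ← monomialCharacter_toricParam_eq_iff]
  · rintro f ⟨a, hdvd, hdeg, rfl⟩
    have hhom := isHomogeneous_prod_X_pow_sub (R := K) hdeg
    refine ⟨⟨_, hhom⟩, (forall_mem_toricSet_eval_eq_zero_iff (by omega) v hhom).2 fun x => ?_⟩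
    refine eval_toricParam_prod_X_pow_sub_eq_zero (fun j => ?_) x
    rw [hq, Nat.modEq_sub_one_iff_intCast_dvd hq0]
    push_cast
    exact hdvd j

/-- The vanishing ideal `I(X)` of the toric set of a clutter equals the
ideal generated by the binomials `t^{a⁺} - t^{a⁻}` with `A a⁺ ≡ A a⁻ (mod q-1)`
componentwise and `|a⁺| = |a⁻|`, where `A` is the incidence matrix. -/
theorem stmt15 {K : Type*} [Field K] [Fintype K] {q n s : ℕ}
    (hq : Fintype.card K = q) (hq3 : 3 ≤ q) (hs : 2 ≤ s)
    (v : Fin s → Fin n → ℕ) (hv : IsClutter v) :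
    vanishingIdeal K (toricSet K v) =
      Ideal.span {f : MvPolynomial (Fin s) K | ∃ a : Fin s → ℤ,
        (∀ jj : Fin n, ((q : ℤ) - 1) ∣
          (∑ i, ((a i).toNat : ℤ) * (v i jj : ℤ)
            - ∑ i, (((-(a i)).toNat : ℤ)) * (v i jj : ℤ))) ∧
        (∑ j, (a j).toNat = ∑ j, (-(a j)).toNat) ∧
        f = ∏ i, MvPolynomial.X i ^ (a i).toNat
          - ∏ i, MvPolynomial.X i ^ (-(a i)).toNat} :=
  stmt15_general hq hs v
end
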